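/- Let K⁺, K⁻ : ℕ → ℕ → ℝ be nonnegative kernels and K̂ : ℕ → ℕ → ℝ a nonnegative symmetric majorant kernel with K̂(x,y) ≥ max{K⁺(x,y), K⁻(x,y)} for all x, y. Let μ⊕, μ⊖ : ℕ → ℝ be nonnegative finitely supported functions, and for y ≥ 1 set T₊(y) := Σ_{x≥1} K̂(x,y) μ⊕(x) and T₋(y) := Σ_{z≥1} K̂(y,z) μ⊖(z). Define r⁻(x,y,z) := K̂(x,y)·K⁻(y,z)/T₊(y), r⁺(x,y,z) := K̂(y,z)·K⁺(x,y)/T₋(y), K_D⁰ := min{r⁻, r⁺} and Δ_D⁺ := max{r⁺ − r⁻, 0}. Then for all x, y ≥ 1 with T₋(y) > 0, Σ_{z≥1} ( K_D⁰(x,y,z) + Δ_D⁺(x,y,z) ) μ⊖(z) = K⁺(x,y). That is, in the Double Coupling algorithm, a given pair consisting of a ⊕-particle of size x and a ⊙-particle of size y coagulates in the X⁺ system at the correct total rate K⁺(x,y). -/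

import Mathlib

/-! Pointwise `min r⁻ r⁺ + max (r⁺ - r⁻) 0 = r⁺`, so the sum is `∑ r⁺ μ⊖`, and `r⁺` is
`K⁺(x,y)` times the weights `K̂(y,z) μ⊖(z)` normalised by their total `T₋(y)`. -/

theorem min_add_max_sub_zero {α : Type*} [AddCommGroup α] [LinearOrder α] [IsOrderedAddMonoid α]
    (a b : α) : min a b + max (b - a) 0 = b := by
  rcases le_total a b with h | h
  · rw [min_eq_left h, max_eq_left (sub_nonneg.mpr h), add_sub_cancel]
  · rw [min_eq_right h, max_eq_right (sub_nonpos.mpr h), add_zero]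

theorem finsum_mem_mul_div_finsum_mem {α K : Type*} [Field K] {s : Set α} (w : α → K) (c : K)
    (hw : ∑ᶠ z ∈ s, w z ≠ 0) : ∑ᶠ z ∈ s, w z * c / ∑ᶠ z ∈ s, w z = c := by
  simp_rw [mul_div_assoc]
  rw [← finsum_mem_mul, mul_div_cancel₀ c hw]

theorem double_coupling_correct_plus_rate_general
    (Kp Km Khat : ℕ → ℕ → ℝ)
    (μp μm : ℕ → ℝ) :
    let Tp : ℕ → ℝ := fun y => ∑ᶠ x ∈ {x : ℕ | 1 ≤ x}, Khat x y * μp x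
    let Tm : ℕ → ℝ := fun y => ∑ᶠ z ∈ {z : ℕ | 1 ≤ z}, Khat y z * μm z
    let rm : ℕ → ℕ → ℕ → ℝ := fun x y z => Khat x y * Km y z / Tp y
    let rp : ℕ → ℕ → ℕ → ℝ := fun x y z => Khat y z * Kp x y / Tm y
    let KD0 : ℕ → ℕ → ℕ → ℝ := fun x y z => min (rm x y z) (rp x y z)
    let ΔDp : ℕ → ℕ → ℕ → ℝ := fun x y z => max (rp x y z - rm x y z) 0
    ∀ x y : ℕ, 1 ≤ x → 1 ≤ y → 0 < Tm y →
      ∑ᶠ z ∈ {z : ℕ | 1 ≤ z}, (KD0 x y z + ΔDp x y z) * μm z = Kp x y := by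
  intro Tp Tm rm rp KD0 ΔDp x y _ _ hTm
  calc ∑ᶠ z ∈ {z : ℕ | 1 ≤ z}, (KD0 x y z + ΔDp x y z) * μm z
      = ∑ᶠ z ∈ {z : ℕ | 1 ≤ z}, Khat y z * μm z * Kp x y / Tm y :=
        finsum_mem_congr rfl fun z _ => by
          simp only [KD0, ΔDp, min_add_max_sub_zero, rp]
          ring
    _ = Kp x y := finsum_mem_mul_div_finsum_mem _ _ hTm.ne'

/-- In the Double Coupling algorithm, a given pair consisting of a ⊕-particle of size `x`
and a ⊙-particle of size `y` coagulates in the `X⁺` system at the correct total rate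
`K⁺(x,y)`: summing the simultaneous rate `K_D⁰ = min{r⁻, r⁺}` and the `X⁺`-only rate
`Δ_D⁺ = max{r⁺ − r⁻, 0}` against the ⊖-density gives exactly `K⁺(x,y)`. -/
theorem double_coupling_correct_plus_rate
    (Kp Km Khat : ℕ → ℕ → ℝ)
    (hKp : ∀ x y, 0 ≤ Kp x y) (hKm : ∀ x y, 0 ≤ Km x y)
    (hKhat : ∀ x y, 0 ≤ Khat x y)
    (hKhatSymm : ∀ x y, Khat x y = Khat y x)
    (hMaj : ∀ x y, max (Kp x y) (Km x y) ≤ Khat x y)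
    (μp μm : ℕ → ℝ) (hμp : ∀ x, 0 ≤ μp x) (hμm : ∀ x, 0 ≤ μm x)
    (hμpFin : (Function.support μp).Finite) (hμmFin : (Function.support μm).Finite) :
    let Tp : ℕ → ℝ := fun y => ∑ᶠ x ∈ {x : ℕ | 1 ≤ x}, Khat x y * μp x
    let Tm : ℕ → ℝ := fun y => ∑ᶠ z ∈ {z : ℕ | 1 ≤ z}, Khat y z * μm z
    let rm : ℕ → ℕ → ℕ → ℝ := fun x y z => Khat x y * Km y z / Tp y
    let rp : ℕ → ℕ → ℕ → ℝ := fun x y z => Khat y z * Kp x y / Tm y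
    let KD0 : ℕ → ℕ → ℕ → ℝ := fun x y z => min (rm x y z) (rp x y z)
    let ΔDp : ℕ → ℕ → ℕ → ℝ := fun x y z => max (rp x y z - rm x y z) 0
    ∀ x y : ℕ, 1 ≤ x → 1 ≤ y → 0 < Tm y →
      ∑ᶠ z ∈ {z : ℕ | 1 ≤ z}, (KD0 x y z + ΔDp x y z) * μm z = Kp x y :=
  double_coupling_correct_plus_rate_general Kp Km Khat μp μm
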